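/- Let q be a prime power, let f ∈ 𝔽_q[T] be a monic irreducible polynomial, let r ≥ 2 be an integer, let 𝔽̄_q be an algebraic closure of 𝔽_q, and let b ∈ 𝔽̄_q be an element with f(b) ≠ 0. Let L := 𝔽̄_q((s)) be the field of formal Laurent series over 𝔽̄_q, and set T := b + s ∈ L and p₁ := T·Y + Y^q + f(T)·Y^{q^r} ∈ L[Y]. Then for every polynomial a = Σ_i a_i T^i ∈ 𝔽_q[T] with a(b) ≠ 0, the polynomial φ_a := Σ_i a_i · p₁^{∘i} ∈ L[Y] splits completely over L, where p₁^{∘i} denotes i-fold composition (p₁^{∘0} = Y). -/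

import Mathlib

open Polynomial

/-!
The coefficients of `p₁` already lie in `A = 𝔽̄_q⟦s⟧` (with `T = b + s`), and its leading
coefficient `f(T)` is a unit because `f(b) ≠ 0`. Being `𝔽_q`-linear in characteristic `p`, `p₁`
has constant derivative `T`; hence `φ_a` has constant derivative `a(T)`, a unit since
`a(b) ≠ 0`, and unit leading coefficient. So `φ_a` reduces modulo `s` to a separable polynomial
over the algebraically closed field `𝔽̄_q`; each of its roots lifts to `A` by Hensel's lemma,
and `φ_a` splits over `A`, hence over `L`.
-/

universe u

namespace Polynomial

theorem separable_of_derivative_eq_C {R : Type*} [CommSemiring R] {f : R[X]} {c : R}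
    (hc : IsUnit c) (h : derivative f = C c) : f.Separable := by
  obtain ⟨u, rfl⟩ := hc
  exact ⟨0, C ((u⁻¹ : Rˣ) : R), by rw [h, zero_mul, zero_add, ← C_mul, u.inv_mul, C_1]⟩

section Henselian

variable {R k : Type u} [CommRing R] [HenselianLocalRing R] [Field k] [IsAlgClosed k]
  {φ : R →+* k}

theorem Splits.of_monic_of_separable_map (hφ : Function.Surjective φ) {P : R[X]}
    (hP : P.Monic) (hsep : (P.map φ).Separable) : P.Splits := by
  induction hn : P.natDegree using Nat.strong_induction_on generalizing P with
  | _ n ih =>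
  rcases Nat.eq_zero_or_pos n with rfl | hpos
  · exact Splits.of_natDegree_eq_zero hn
  obtain ⟨x, hx⟩ := IsAlgClosed.exists_root (P.map φ) (by
    rw [degree_eq_natDegree (hP.map φ).ne_zero, hP.natDegree_map, hn]
    exact_mod_cast hpos.ne')
  have hensel := ((HenselianLocalRing.TFAE R).out 0 2).mp ‹_›
  obtain ⟨α, hα, -⟩ := hensel φ hφ P hP x (by rwa [← eval_map])
    (by rw [← eval_map, ← derivative_map]; exact hsep.eval₂_derivative_ne_zero _ hx)
  set Q := P /ₘ (X - C α)
  have hPQ : (X - C α) * Q = P := mul_divByMonic_eq_iff_isRoot.mpr hα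
  have hQ : Q.Monic := (monic_X_sub_C α).of_mul_monic_left (hPQ ▸ hP)
  have hQn : Q.natDegree < n := by
    have := congrArg natDegree hPQ
    rw [(monic_X_sub_C α).natDegree_mul hQ, natDegree_X_sub_C] at this
    omega
  rw [← hPQ]
  refine (Splits.X_sub_C α).mul (ih _ hQn hQ ?_ rfl)
  rw [← hPQ, Polynomial.map_mul] at hsep
  exact hsep.of_mul_right

theorem Splits.of_isUnit_leadingCoeff_of_separable_map (hφ : Function.Surjective φ) {P : R[X]}
    (hP : IsUnit P.leadingCoeff) (hsep : (P.map φ).Separable) : P.Splits := by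
  obtain ⟨u, hu⟩ := hP
  have hmonic : (C ((u⁻¹ : Rˣ) : R) * P).Monic :=
    monic_C_mul_of_mul_leadingCoeff_eq_one (by rw [← hu, Units.inv_mul])
  have hsep' : ((C ((u⁻¹ : Rˣ) : R) * P).map φ).Separable := by
    rw [Polynomial.map_mul, map_C]
    exact hsep.unit_mul (isUnit_C.mpr ((u⁻¹).isUnit.map φ))
  have := (Splits.of_monic_of_separable_map hφ hmonic hsep').C_mul u
  rwa [← mul_assoc, ← C_mul, u.mul_inv, C_1, one_mul] at this

end Henselian

end Polynomial

instance PowerSeries.henselianLocalRing {K : Type*} [Field K] :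
    HenselianLocalRing (PowerSeries K) where
  is_henselian f hf a₀ h₁ h₂ := by
    rw [PowerSeries.maximalIdeal_eq_span_X] at h₁ ⊢
    -- `HenselianRing _ (span {X})` comes from `X`-adic completeness
    exact HenselianRing.is_henselian f hf a₀ h₁ (h₂.map _)

namespace Polynomial

section CompEval

variable {A : Type*} [CommRing A]

/-- `a(P)` with composition as multiplication, `Σ aⱼ P^{∘j}`: the Drinfeld action `φ_a`
when `P = φ_T`. -/
noncomputable def compEval (a P : A[X]) : A[X] :=
  ∑ j ∈ Finset.range (a.natDegree + 1), C (a.coeff j) * (fun g : A[X] => g.comp P)^[j] X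

theorem derivative_iterate_comp_X {P : A[X]} {t : A} (h : derivative P = C t) (j : ℕ) :
    derivative ((fun g : A[X] => g.comp P)^[j] X) = C (t ^ j) := by
  induction j with
  | zero => simp
  | succ j ih =>
    rw [Function.iterate_succ_apply', derivative_comp, ih, h, C_comp, ← C_mul, ← pow_succ']

theorem derivative_compEval {P : A[X]} {t : A} (h : derivative P = C t) (a : A[X]) :
    derivative (compEval a P) = C (a.eval t) := by
  simp only [compEval, derivative_sum, derivative_C_mul, derivative_iterate_comp_X h, ← C_mul,
    ← map_sum, eval_eq_sum_range]

theorem map_compEval {B : Type*} [CommRing B] {φ : A →+* B} (hφ : Function.Injective φ)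
    (a P : A[X]) : (compEval a P).map φ = compEval (a.map φ) (P.map φ) := by
  have hiter (j : ℕ) : ((fun g : A[X] => g.comp P)^[j] X).map φ
      = (fun g : B[X] => g.comp (P.map φ))^[j] X := by
    induction j with
    | zero => simp
    | succ j ih => rw [Function.iterate_succ_apply', Function.iterate_succ_apply', map_comp, ih]
  simp only [compEval, Polynomial.map_sum, Polynomial.map_mul, map_C, hiter,
    natDegree_map_eq_of_injective hφ, coeff_map]

theorem compEval_map {B : Type*} [CommRing B] {φ : A →+* B} (hφ : Function.Injective φ)
    (a : A[X]) (P : B[X]) : compEval (a.map φ) P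
      = ∑ j ∈ Finset.range (a.natDegree + 1),
          C (φ (a.coeff j)) * (fun g : B[X] => g.comp P)^[j] X := by
  simp only [compEval, natDegree_map_eq_of_injective hφ, coeff_map]

section Domain

variable [IsDomain A]

theorem natDegree_iterate_comp_X (P : A[X]) (j : ℕ) :
    ((fun g : A[X] => g.comp P)^[j] X).natDegree = P.natDegree ^ j := by
  induction j with
  | zero => simp
  | succ j ih => rw [Function.iterate_succ_apply', natDegree_comp, ih, pow_succ]

theorem isUnit_leadingCoeff_iterate_comp_X {P : A[X]} (hP : IsUnit P.leadingCoeff)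
    (hd : P.natDegree ≠ 0) (j : ℕ) :
    IsUnit ((fun g : A[X] => g.comp P)^[j] X).leadingCoeff := by
  induction j with
  | zero => simp
  | succ j ih =>
    rw [Function.iterate_succ_apply', leadingCoeff_comp hd]
    exact ih.mul (hP.pow _)

theorem leadingCoeff_compEval {a P : A[X]} (ha : a ≠ 0) (hd : 1 < P.natDegree) :
    (compEval a P).leadingCoeff
      = a.leadingCoeff * ((fun g : A[X] => g.comp P)^[a.natDegree] X).leadingCoeff := by
  set Q : ℕ → A[X] := fun j => (fun g : A[X] => g.comp P)^[j] X
  have hQ : Q a.natDegree ≠ 0 := ne_zero_of_natDegree_gt (n := 0) <| by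
    rw [natDegree_iterate_comp_X]; positivity
  have hlt : (∑ j ∈ Finset.range a.natDegree, C (a.coeff j) * Q j).degree
      < (C a.leadingCoeff * Q a.natDegree).degree := by
    rw [degree_C_mul (leadingCoeff_ne_zero.mpr ha), degree_eq_natDegree hQ,
      natDegree_iterate_comp_X]
    refine (degree_sum_le _ _).trans_lt
      ((Finset.sup_lt_iff (WithBot.bot_lt_coe _)).2 fun j hj => ?_)
    calc (C (a.coeff j) * Q j).degree ≤ (Q j).degree := by
          rw [← smul_eq_C_mul]; exact degree_smul_le _ _
      _ ≤ (Q j).natDegree := degree_le_natDegree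
      _ < _ := by
          rw [natDegree_iterate_comp_X]
          exact_mod_cast Nat.pow_lt_pow_right hd (Finset.mem_range.mp hj)
  rw [compEval, Finset.sum_range_succ, ← leadingCoeff, leadingCoeff_add_of_degree_lt hlt,
    leadingCoeff_mul, leadingCoeff_C]

theorem isUnit_leadingCoeff_compEval {a P : A[X]} (ha : IsUnit a.leadingCoeff)
    (hP : IsUnit P.leadingCoeff) (hd : 1 < P.natDegree) : IsUnit (compEval a P).leadingCoeff := by
  rw [leadingCoeff_compEval (by rintro rfl; simp at ha) hd]
  exact ha.mul (isUnit_leadingCoeff_iterate_comp_X hP (by omega) _)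

end Domain

end CompEval

section Trinomial

variable {A : Type*} [CommRing A] {t g : A} {q r : ℕ}

theorem derivative_C_mul_X_add_X_pow_add_C_mul_X_pow (hq : (q : A) = 0) (hr : r ≠ 0) :
    derivative (C t * X + X ^ q + C g * X ^ q ^ r) = C t := by
  simp [derivative_X_pow, hq, hr]

theorem degree_C_mul_X_add_X_pow_lt (hg : g ≠ 0) (hq : 1 < q) (hr : 1 < r) :
    (C t * X + X ^ q).degree < (C g * X ^ q ^ r).degree := by
  rw [degree_C_mul_X_pow _ hg]
  calc (C t * X + X ^ q).degree ≤ (q : WithBot ℕ) :=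
        (degree_add_le _ _).trans (max_le ((degree_C_mul_X_le t).trans (mod_cast hq.le))
          (degree_X_pow_le q))
    _ < (q ^ r : ℕ) := by
        exact_mod_cast (pow_one q).symm.trans_lt (Nat.pow_lt_pow_right hq hr)

theorem natDegree_C_mul_X_add_X_pow_add_C_mul_X_pow (hg : g ≠ 0) (hq : 1 < q) (hr : 1 < r) :
    (C t * X + X ^ q + C g * X ^ q ^ r).natDegree = q ^ r := by
  rw [natDegree_add_eq_right_of_degree_lt (degree_C_mul_X_add_X_pow_lt hg hq hr),
    natDegree_C_mul_X_pow _ _ hg]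

theorem leadingCoeff_C_mul_X_add_X_pow_add_C_mul_X_pow (hg : g ≠ 0) (hq : 1 < q) (hr : 1 < r) :
    (C t * X + X ^ q + C g * X ^ q ^ r).leadingCoeff = g := by
  rw [leadingCoeff_add_of_degree_lt (degree_C_mul_X_add_X_pow_lt hg hq hr),
    leadingCoeff_C_mul_X_pow]

end Trinomial

theorem splits_compEval_C_mul_X_add_X_pow_add_C_mul_X_pow {R k : Type u} [CommRing R]
    [IsDomain R] [HenselianLocalRing R] [Field k] [IsAlgClosed k] {φ : R →+* k}
    (hφ : Function.Surjective φ) {t g : R} {q r : ℕ} (hq₀ : (q : R) = 0) (hq : 1 < q)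
    (hr : 1 < r) (hg : IsUnit g) {a : R[X]} (ha : IsUnit a.leadingCoeff)
    (hat : φ (a.eval t) ≠ 0) : (compEval a (C t * X + X ^ q + C g * X ^ q ^ r)).Splits := by
  refine Splits.of_isUnit_leadingCoeff_of_separable_map hφ (isUnit_leadingCoeff_compEval ha ?_ ?_)
    (separable_of_derivative_eq_C hat.isUnit ?_)
  · rwa [leadingCoeff_C_mul_X_add_X_pow_add_C_mul_X_pow hg.ne_zero hq hr]
  · rw [natDegree_C_mul_X_add_X_pow_add_C_mul_X_pow hg.ne_zero hq hr]
    exact Nat.one_lt_pow (by omega) hq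
  · rw [derivative_map, derivative_compEval (derivative_C_mul_X_add_X_pow_add_C_mul_X_pow hq₀
      (by omega)), map_C]

end Polynomial

theorem stmt_9_general (q : ℕ)
    (Fq : Type) [Field Fq] [Fintype Fq] (hcard : Fintype.card Fq = q)
    (f : Polynomial Fq)
    (r : ℕ) (hr : 2 ≤ r)
    (b : AlgebraicClosure Fq) (hb : Polynomial.aeval b f ≠ 0)
    (T : LaurentSeries (AlgebraicClosure Fq))
    (hT : T = HahnSeries.C b + HahnSeries.single (1 : ℤ) 1)
    (p₁ : Polynomial (LaurentSeries (AlgebraicClosure Fq)))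
    (hp₁ : p₁ = C T * X + X ^ q
      + C (Polynomial.eval₂
          ((HahnSeries.C : (AlgebraicClosure Fq) →+* LaurentSeries (AlgebraicClosure Fq)).comp
            (algebraMap Fq (AlgebraicClosure Fq))) T f) * X ^ q ^ r) :
    ∀ a : Polynomial Fq, Polynomial.aeval b a ≠ 0 →
      ((∑ j ∈ Finset.range (a.natDegree + 1),
        C (HahnSeries.C (algebraMap Fq (AlgebraicClosure Fq) (a.coeff j)))
          * ((fun g : Polynomial (LaurentSeries (AlgebraicClosure Fq)) => g.comp p₁)^[j] X)).map
        (RingHom.id (LaurentSeries (AlgebraicClosure Fq)))).Splits := by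
  intro a ha
  set ι : PowerSeries (AlgebraicClosure Fq) →+* LaurentSeries (AlgebraicClosure Fq) :=
    HahnSeries.ofPowerSeries ℤ _
  set ψ : Fq →+* PowerSeries (AlgebraicClosure Fq) := PowerSeries.C.comp (algebraMap _ _)
  set s : PowerSeries (AlgebraicClosure Fq) := PowerSeries.C b + PowerSeries.X
  set P : (PowerSeries (AlgebraicClosure Fq))[X] := C s * X + X ^ q + C (f.eval₂ ψ s) * X ^ q ^ r
  have hq : 1 < q := hcard ▸ Fintype.one_lt_card
  have hqA : (q : PowerSeries (AlgebraicClosure Fq)) = 0 := by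
    rw [← map_natCast ψ, ← hcard, FiniteField.cast_card_eq_zero, map_zero]
  have hιψ : ι.comp ψ = HahnSeries.C.comp (algebraMap _ _) := by
    ext; simp [ι, ψ, HahnSeries.ofPowerSeries_C]
  have hιs : ι s = T := by
    simp [ι, s, hT, HahnSeries.ofPowerSeries_C, HahnSeries.ofPowerSeries_X]
  have hP : P.map ι = p₁ := by
    simp only [P, hp₁, Polynomial.map_add, Polynomial.map_mul, Polynomial.map_pow, map_C, map_X,
      hom_eval₂ (g := ι), hιψ, hιs]
  have heval (g : Fq[X]) : PowerSeries.constantCoeff (g.eval₂ ψ s) = aeval b g := by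
    rw [hom_eval₂ (g := PowerSeries.constantCoeff), ← RingHom.comp_assoc,
      PowerSeries.constantCoeff_comp_C]
    simp [s, aeval_def]
  have hf : IsUnit (f.eval₂ ψ s) :=
    PowerSeries.isUnit_iff_constantCoeff.mpr (by rw [heval]; exact hb.isUnit)
  have hlc : IsUnit (a.map ψ).leadingCoeff := by
    rw [leadingCoeff_map_of_injective ψ.injective]
    exact (leadingCoeff_ne_zero.mpr (by rintro rfl; simp at ha)).isUnit.map ψ
  have hsplit : (compEval (a.map ψ) P).Splits :=
    splits_compEval_C_mul_X_add_X_pow_add_C_mul_X_pow PowerSeries.constantCoeff_surj hqA hq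
      (by omega) hf hlc (by rwa [eval_map, heval])
  convert hsplit.map ι using 1
  rw [Polynomial.map_id, map_compEval HahnSeries.ofPowerSeries_injective, hP, map_map, hιψ,
    compEval_map (RingHom.injective _)]
  rfl

/-- Good reduction / unramifiedness of torsion away from `𝔭 = (f)`: over the Laurent
series field `L = 𝔽̄_q((s))` with `T = b + s`, where `f(b) ≠ 0`, every division
polynomial `φ_a = Σ_i a_i·p₁^{∘i}` with `a(b) ≠ 0` of the Drinfeld module
`p₁ = T·Y + Y^q + f(T)·Y^{q^r}` splits completely over `L`. -/
theorem stmt_9 (p k q : ℕ) (hp : p.Prime) (hk : 0 < k) (hq : q = p ^ k)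
    (Fq : Type) [Field Fq] [Fintype Fq] (hcard : Fintype.card Fq = q)
    (f : Polynomial Fq) (hmonic : f.Monic) (hirr : Irreducible f)
    (r : ℕ) (hr : 2 ≤ r)
    (b : AlgebraicClosure Fq) (hb : Polynomial.aeval b f ≠ 0)
    (T : LaurentSeries (AlgebraicClosure Fq))
    (hT : T = HahnSeries.C b + HahnSeries.single (1 : ℤ) 1)
    (p₁ : Polynomial (LaurentSeries (AlgebraicClosure Fq)))
    (hp₁ : p₁ = C T * X + X ^ q
      + C (Polynomial.eval₂
          ((HahnSeries.C : (AlgebraicClosure Fq) →+* LaurentSeries (AlgebraicClosure Fq)).comp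
            (algebraMap Fq (AlgebraicClosure Fq))) T f) * X ^ q ^ r) :
    ∀ a : Polynomial Fq, Polynomial.aeval b a ≠ 0 →
      ((∑ j ∈ Finset.range (a.natDegree + 1),
        C (HahnSeries.C (algebraMap Fq (AlgebraicClosure Fq) (a.coeff j)))
          * ((fun g : Polynomial (LaurentSeries (AlgebraicClosure Fq)) => g.comp p₁)^[j] X)).map
        (RingHom.id (LaurentSeries (AlgebraicClosure Fq)))).Splits :=
  stmt_9_general q Fq hcard f r hr b hb T hT p₁ hp₁
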